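/- Let H = X⊗I₂⊗X + I₂⊗X⊗X, let ρ₀ = ½|ψ₊⟩⟨ψ₊|⊗|+⟩⟨+| + ½|φ₊⟩⟨φ₊|⊗|−⟩⟨−| with ψ₊ = (|01⟩+|10⟩)/√2 and φ₊ = (|00⟩+|11⟩)/√2, and let ρ_t = exp(−itH) ρ₀ exp(itH). Then at time t = π/8 the reduced state of the probes is pure and maximally entangled: Tr_C ρ_{π/8} = |Φ⟩⟨Φ| with Φ = (|++⟩ − i|−−⟩)/√2, and moreover the single-qubit marginal Tr_B |Φ⟩⟨Φ| equals (1/2)·I₂. (Hence E_{A:B} reaches 1 at t = π/8, so the entanglement between the probes grows from 0 to 1 even though the mediator C remains classically correlated at all times; this gain is a localisation of the entanglement initially present in the partition A:BC.) -/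

import Mathlib

open Matrix
open scoped Kronecker

noncomputable section

/-- The Pauli-x matrix. -/
def X : Matrix (Fin 2) (Fin 2) ℂ := !![0, 1; 1, 0]

/-- The 2×2 identity matrix. -/
def Id2 : Matrix (Fin 2) (Fin 2) ℂ := 1

/-- `H = X⊗I₂⊗X + I₂⊗X⊗X` (tensor factors ordered A, B, C). -/
def HH : Matrix (Fin 2 × Fin 2 × Fin 2) (Fin 2 × Fin 2 × Fin 2) ℂ :=
  X ⊗ₖ (Id2 ⊗ₖ X) + Id2 ⊗ₖ (X ⊗ₖ X)

/-- Standard basis vector `|0⟩` of ℂ². -/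
def ket0 : Fin 2 → ℂ := ![1, 0]

/-- Standard basis vector `|1⟩` of ℂ². -/
def ket1 : Fin 2 → ℂ := ![0, 1]

/-- `|ab⟩ = |a⟩⊗|b⟩ ∈ ℂ⁴` (Kronecker product of vectors). -/
def kron2 (u v : Fin 2 → ℂ) : Fin 2 × Fin 2 → ℂ := fun p => u p.1 * v p.2

/-- `|+⟩ = (|0⟩ + |1⟩)/√2`. -/
def plus : Fin 2 → ℂ := ((Real.sqrt 2 : ℂ))⁻¹ • (ket0 + ket1)

/-- `|−⟩ = (|0⟩ − |1⟩)/√2`. -/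
def minus : Fin 2 → ℂ := ((Real.sqrt 2 : ℂ))⁻¹ • (ket0 - ket1)

/-- Bell state `ψ₊ = (|01⟩ + |10⟩)/√2`. -/
def psiPlus : Fin 2 × Fin 2 → ℂ :=
  ((Real.sqrt 2 : ℂ))⁻¹ • (kron2 ket0 ket1 + kron2 ket1 ket0)

/-- Bell state `φ₊ = (|00⟩ + |11⟩)/√2`. -/
def phiPlus : Fin 2 × Fin 2 → ℂ :=
  ((Real.sqrt 2 : ℂ))⁻¹ • (kron2 ket0 ket0 + kron2 ket1 ket1)

/-- Tensor product of a two-qubit (AB) vector with a one-qubit (C) vector. -/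
def joinABC (w : Fin 2 × Fin 2 → ℂ) (v : Fin 2 → ℂ) : Fin 2 × Fin 2 × Fin 2 → ℂ :=
  fun p => w (p.1, p.2.1) * v p.2.2

/-- The outer product (projector) `|v⟩⟨v|`. -/
def outer {n : Type*} (v : n → ℂ) : Matrix n n ℂ := vecMulVec v (star v)

/-- `ρ₀ = ½|ψ₊⟩⟨ψ₊|⊗|+⟩⟨+| + ½|φ₊⟩⟨φ₊|⊗|−⟩⟨−|`. -/
def rho0 : Matrix (Fin 2 × Fin 2 × Fin 2) (Fin 2 × Fin 2 × Fin 2) ℂ :=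
  (1 / 2 : ℂ) • outer (joinABC psiPlus plus) + (1 / 2 : ℂ) • outer (joinABC phiPlus minus)

/-- `ρ_t = exp(−itH) ρ₀ exp(itH)`. -/
def rho (t : ℝ) : Matrix (Fin 2 × Fin 2 × Fin 2) (Fin 2 × Fin 2 × Fin 2) ℂ :=
  NormedSpace.exp ((-(Complex.I * (t : ℂ))) • HH) * rho0 *
    NormedSpace.exp ((Complex.I * (t : ℂ)) • HH)

/-- Partial trace over subsystem C:
`(Tr_C ρ)((a,b), (a',b')) = Σ_c ρ((a,b,c), (a',b',c))`. -/
def trC (ρ : Matrix (Fin 2 × Fin 2 × Fin 2) (Fin 2 × Fin 2 × Fin 2) ℂ) :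
    Matrix (Fin 2 × Fin 2) (Fin 2 × Fin 2) ℂ :=
  Matrix.of fun ab ab' => ∑ c : Fin 2, ρ (ab.1, ab.2, c) (ab'.1, ab'.2, c)

/-- Partial trace over subsystem B of a two-qubit matrix:
`(Tr_B σ)(a, a') = Σ_b σ((a,b), (a',b))`. -/
def trB (σ : Matrix (Fin 2 × Fin 2) (Fin 2 × Fin 2) ℂ) : Matrix (Fin 2) (Fin 2) ℂ :=
  Matrix.of fun a a' => ∑ b : Fin 2, σ (a, b) (a', b)

/-- `Φ = (|++⟩ − i|−−⟩)/√2`. -/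
def Phi : Fin 2 × Fin 2 → ℂ :=
  ((Real.sqrt 2 : ℂ))⁻¹ • (kron2 plus plus - Complex.I • kron2 minus minus)

/-!
Since `H = (X_A + X_B) ⊗ X_C`, every product `|±±±⟩` of `X`-eigenvectors is an eigenvector of `H`.
In the `X` basis `ψ₊ = (|++⟩ − |−−⟩)/√2` and `φ₊ = (|++⟩ + |−−⟩)/√2`, so in each branch of `ρ₀`
the mediator stays in `|±⟩` while the probes only pick up the phases `e^{∓2it}` on `|++⟩` and
`|−−⟩`; hence `Tr_C ρ_t` is an equal mixture of two pure probe states. At `t = π/8` both of them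
are `Φ` up to the global phases `e^{∓iπ/4}`, so the mixture is the pure state `|Φ⟩⟨Φ|`.
-/

open Real

namespace Matrix

variable {n : Type*}

theorem outer_smul (c : ℂ) (v : n → ℂ) : outer (c • v) = (c * star c) • outer v := by
  ext i j
  simp only [outer, vecMulVec_apply, Pi.star_apply, Pi.smul_apply, smul_apply, smul_eq_mul,
    star_mul']
  ring

variable [Fintype n]

theorem mul_outer_mul_conjTranspose (U : Matrix n n ℂ) (v : n → ℂ) :
    U * outer v * Uᴴ = outer (U *ᵥ v) := by
  rw [outer, outer, mul_vecMulVec, vecMulVec_mul, star_mulVec]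

theorem pow_mulVec_of_mulVec_eq_smul {R : Type*} [CommSemiring R] [DecidableEq n]
    {A : Matrix n n R} {v : n → R} {μ : R} (h : A *ᵥ v = μ • v) (k : ℕ) :
    (A ^ k) *ᵥ v = μ ^ k • v := by
  induction k with
  | zero => simp
  | succ k ih => rw [pow_succ, ← mulVec_mulVec, h, mulVec_smul, ih, smul_smul, pow_succ']

theorem exp_mulVec_of_mulVec_eq_smul [DecidableEq n] {A : Matrix n n ℂ} {v : n → ℂ} {μ : ℂ}
    (h : A *ᵥ v = μ • v) : NormedSpace.exp A *ᵥ v = Complex.exp μ • v := by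
  let _ := Matrix.linftyOpNormedRing (n := n) (α := ℂ)
  let _ := Matrix.linftyOpNormedAlgebra (n := n) (R := ℂ) (α := ℂ)
  have hA := (NormedSpace.exp_series_hasSum_exp' (𝕂 := ℂ) A).map
    (mulVec.addMonoidHomLeft v) (continuous_id.matrix_mulVec continuous_const)
  have hμ := (NormedSpace.exp_series_hasSum_exp' (𝕂 := ℂ) μ).smul_const v
  rw [← Complex.exp_eq_exp_ℂ] at hμ
  refine hA.unique ?_
  convert hμ using 2 with k
  simp [mulVec.addMonoidHomLeft, smul_mulVec, pow_mulVec_of_mulVec_eq_smul h, smul_smul]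

end Matrix

theorem Complex.exp_ofReal_mul_I_mul_star (θ : ℝ) :
    Complex.exp (θ * Complex.I) * star (Complex.exp (θ * Complex.I)) = 1 := by
  rw [Complex.star_def, Complex.mul_conj, Complex.normSq_eq_norm_sq, Complex.norm_exp_ofReal_mul_I]
  norm_num

theorem Complex.exp_pi_div_four_mul_I :
    Complex.exp (π / 4 * Complex.I) = Complex.I * Complex.exp (-(π / 4 * Complex.I)) := by
  calc Complex.exp (π / 4 * Complex.I)
      = Complex.exp (π / 2 * Complex.I + -(π / 4 * Complex.I)) := by ring_nf
    _ = Complex.I * Complex.exp (-(π / 4 * Complex.I)) := by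
      rw [Complex.exp_add, Complex.exp_pi_div_two_mul_I]

theorem inv_sqrt_two_sq : ((√2 : ℂ)⁻¹) ^ 2 = 1 / 2 := by
  rw [inv_pow, ← Complex.ofReal_pow, Real.sq_sqrt zero_le_two]
  norm_num

theorem kronecker_mulVec_joinABC (A B C : Matrix (Fin 2) (Fin 2) ℂ) (u v w : Fin 2 → ℂ) :
    (A ⊗ₖ (B ⊗ₖ C)) *ᵥ joinABC (kron2 u v) w = joinABC (kron2 (A *ᵥ u) (B *ᵥ v)) (C *ᵥ w) := by
  ext ⟨a, b, c⟩
  simp only [mulVec, dotProduct, Fintype.sum_prod_type, Fin.sum_univ_two, kroneckerMap_apply,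
    joinABC, kron2]
  ring

theorem joinABC_add (w w' : Fin 2 × Fin 2 → ℂ) (v : Fin 2 → ℂ) :
    joinABC (w + w') v = joinABC w v + joinABC w' v := by
  ext p; simp [joinABC, add_mul]

theorem joinABC_smul (c : ℂ) (w : Fin 2 × Fin 2 → ℂ) (v : Fin 2 → ℂ) :
    joinABC (c • w) v = c • joinABC w v := by
  ext p; simp [joinABC, mul_assoc]

theorem X_mulVec_plus : X *ᵥ plus = (1 : ℂ) • plus := by
  ext i; fin_cases i <;> simp [X, plus, ket0, ket1, mulVec, dotProduct, Fin.sum_univ_two]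

theorem X_mulVec_minus : X *ᵥ minus = (-1 : ℂ) • minus := by
  ext i; fin_cases i <;> simp [X, minus, ket0, ket1, mulVec, dotProduct, Fin.sum_univ_two]

theorem HH_mulVec_joinABC {u v w : Fin 2 → ℂ} {a b c : ℂ} (hu : X *ᵥ u = a • u)
    (hv : X *ᵥ v = b • v) (hw : X *ᵥ w = c • w) :
    HH *ᵥ joinABC (kron2 u v) w = ((a + b) * c) • joinABC (kron2 u v) w := by
  rw [HH, add_mulVec, kronecker_mulVec_joinABC, kronecker_mulVec_joinABC, Id2, one_mulVec,
    one_mulVec, hu, hv, hw]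
  ext p; simp only [joinABC, kron2, Pi.add_apply, Pi.smul_apply, smul_eq_mul]; ring

theorem exp_smul_HH_mulVec_joinABC (s : ℂ) {u v w : Fin 2 → ℂ} {a b c : ℂ}
    (hu : X *ᵥ u = a • u) (hv : X *ᵥ v = b • v) (hw : X *ᵥ w = c • w) :
    NormedSpace.exp (s • HH) *ᵥ joinABC (kron2 u v) w
      = Complex.exp (s * ((a + b) * c)) • joinABC (kron2 u v) w :=
  exp_mulVec_of_mulVec_eq_smul <| by rw [smul_mulVec, HH_mulVec_joinABC hu hv hw, smul_smul]

def plusPlusMinusMinus (α β : ℂ) : Fin 2 × Fin 2 → ℂ :=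
  α • kron2 plus plus + β • kron2 minus minus

theorem smul_plusPlusMinusMinus (c α β : ℂ) :
    c • plusPlusMinusMinus α β = plusPlusMinusMinus (c * α) (c * β) := by
  simp only [plusPlusMinusMinus, smul_add, smul_smul]

theorem psiPlus_eq : psiPlus = plusPlusMinusMinus (√2 : ℂ)⁻¹ (-(√2 : ℂ)⁻¹) := by
  ext ⟨a, b⟩
  fin_cases a <;> fin_cases b <;>
    simp [psiPlus, plusPlusMinusMinus, kron2, plus, minus, ket0, ket1] <;>
    linear_combination (-2 * (√2 : ℂ)⁻¹) * inv_sqrt_two_sq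

theorem phiPlus_eq : phiPlus = plusPlusMinusMinus (√2 : ℂ)⁻¹ (√2 : ℂ)⁻¹ := by
  ext ⟨a, b⟩
  fin_cases a <;> fin_cases b <;>
    simp [phiPlus, plusPlusMinusMinus, kron2, plus, minus, ket0, ket1] <;>
    linear_combination (-2 * (√2 : ℂ)⁻¹) * inv_sqrt_two_sq

theorem Phi_eq : Phi = plusPlusMinusMinus (√2 : ℂ)⁻¹ (-(√2 : ℂ)⁻¹ * Complex.I) := by
  simp only [Phi, plusPlusMinusMinus, smul_sub, smul_smul]
  module

theorem exp_smul_HH_mulVec_plusPlusMinusMinus (s α β : ℂ) {w : Fin 2 → ℂ} {c : ℂ}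
    (hw : X *ᵥ w = c • w) :
    NormedSpace.exp (s • HH) *ᵥ joinABC (plusPlusMinusMinus α β) w
      = joinABC (plusPlusMinusMinus (Complex.exp (2 * c * s) * α)
          (Complex.exp (-(2 * c * s)) * β)) w := by
  simp only [plusPlusMinusMinus, joinABC_add, joinABC_smul, mulVec_add, mulVec_smul,
    exp_smul_HH_mulVec_joinABC s X_mulVec_plus X_mulVec_plus hw,
    exp_smul_HH_mulVec_joinABC s X_mulVec_minus X_mulVec_minus hw, smul_smul]
  ring_nf

theorem HH_isHermitian : HH.IsHermitian := by
  have hX : X.IsHermitian := by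
    ext i j; fin_cases i <;> fin_cases j <;> simp [X]
  have hI : Id2.IsHermitian := isHermitian_one
  rw [HH, IsHermitian, conjTranspose_add, conjTranspose_kronecker, conjTranspose_kronecker,
    conjTranspose_kronecker, conjTranspose_kronecker, hX.eq, hI.eq]

theorem conjTranspose_exp_smul_HH (t : ℝ) :
    (NormedSpace.exp ((-(Complex.I * t)) • HH))ᴴ = NormedSpace.exp ((Complex.I * t) • HH) := by
  rw [← exp_conjTranspose, conjTranspose_smul, HH_isHermitian.eq]
  simp [Complex.conj_ofReal]

theorem rho_eq (t : ℝ) : rho t =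
    (1 / 2 : ℂ) • outer (joinABC (plusPlusMinusMinus (Complex.exp (-(2 * t * Complex.I)) / √2)
        (-Complex.exp (2 * t * Complex.I) / √2)) plus) +
    (1 / 2 : ℂ) • outer (joinABC (plusPlusMinusMinus (Complex.exp (2 * t * Complex.I) / √2)
        (Complex.exp (-(2 * t * Complex.I)) / √2)) minus) := by
  rw [rho, ← conjTranspose_exp_smul_HH, rho0, mul_add, add_mul, mul_smul_comm, smul_mul_assoc,
    mul_smul_comm, smul_mul_assoc, mul_outer_mul_conjTranspose, mul_outer_mul_conjTranspose,
    psiPlus_eq, phiPlus_eq, exp_smul_HH_mulVec_plusPlusMinusMinus _ _ _ X_mulVec_plus,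
    exp_smul_HH_mulVec_plusPlusMinusMinus _ _ _ X_mulVec_minus]
  ring_nf

theorem trC_add (ρ σ : Matrix (Fin 2 × Fin 2 × Fin 2) (Fin 2 × Fin 2 × Fin 2) ℂ) :
    trC (ρ + σ) = trC ρ + trC σ := by
  ext ab ab'; simp [trC, Finset.sum_add_distrib]

theorem trC_smul (c : ℂ) (ρ : Matrix (Fin 2 × Fin 2 × Fin 2) (Fin 2 × Fin 2 × Fin 2) ℂ) :
    trC (c • ρ) = c • trC ρ := by
  ext ab ab'; simp [trC, mul_add]

theorem trC_outer_joinABC (w : Fin 2 × Fin 2 → ℂ) (v : Fin 2 → ℂ) :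
    trC (outer (joinABC w v)) = (v ⬝ᵥ star v) • outer w := by
  ext ab ab'
  simp only [trC, outer, joinABC, of_apply, vecMulVec_apply, Pi.star_apply, star_mul',
    Matrix.smul_apply, smul_eq_mul, dotProduct, Finset.sum_mul]
  exact Finset.sum_congr rfl fun c _ => by ring

theorem plus_dotProduct_star : plus ⬝ᵥ star plus = 1 := by
  simp [plus, ket0, ket1, dotProduct, Fin.sum_univ_two]
  linear_combination 2 * inv_sqrt_two_sq

theorem minus_dotProduct_star : minus ⬝ᵥ star minus = 1 := by
  simp [minus, ket0, ket1, dotProduct, Fin.sum_univ_two]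
  linear_combination 2 * inv_sqrt_two_sq

theorem trC_rho (t : ℝ) : trC (rho t) =
    (1 / 2 : ℂ) • outer (plusPlusMinusMinus (Complex.exp (-(2 * t * Complex.I)) / √2)
        (-Complex.exp (2 * t * Complex.I) / √2)) +
    (1 / 2 : ℂ) • outer (plusPlusMinusMinus (Complex.exp (2 * t * Complex.I) / √2)
        (Complex.exp (-(2 * t * Complex.I)) / √2)) := by
  rw [rho_eq, trC_add, trC_smul, trC_smul, trC_outer_joinABC, trC_outer_joinABC,
    plus_dotProduct_star, minus_dotProduct_star, one_smul, one_smul]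

theorem trC_rho_pi_div_eight : trC (rho (π / 8)) = outer Phi := by
  have hquarter : 2 * ((π / 8 : ℝ) : ℂ) * Complex.I = π / 4 * Complex.I := by push_cast; ring
  have ha : plusPlusMinusMinus (Complex.exp (-(2 * (π / 8 : ℝ) * Complex.I)) / √2)
      (-Complex.exp (2 * (π / 8 : ℝ) * Complex.I) / √2)
      = Complex.exp ((-(π / 4) : ℝ) * Complex.I) • Phi := by
    rw [Phi_eq, smul_plusPlusMinusMinus, hquarter, Complex.exp_pi_div_four_mul_I]
    push_cast
    congr 1 <;> ring_nf
  have hb : plusPlusMinusMinus (Complex.exp (2 * (π / 8 : ℝ) * Complex.I) / √2)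
      (Complex.exp (-(2 * (π / 8 : ℝ) * Complex.I)) / √2)
      = Complex.exp ((π / 4 : ℝ) * Complex.I) • Phi := by
    rw [Phi_eq, smul_plusPlusMinusMinus, hquarter]
    push_cast
    rw [Complex.exp_pi_div_four_mul_I]
    congr 1
    ring_nf
    rw [Complex.I_sq]
    ring
  rw [trC_rho, ha, hb, outer_smul, outer_smul, Complex.exp_ofReal_mul_I_mul_star,
    Complex.exp_ofReal_mul_I_mul_star, ← add_smul]
  norm_num

theorem trB_outer_Phi : trB (outer Phi) = (1 / 2 : ℂ) • Id2 := by
  ext a a'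
  fin_cases a <;> fin_cases a' <;>
    simp [trB, outer, vecMulVec_apply, Phi_eq, plusPlusMinusMinus, kron2, plus, minus, ket0,
      ket1, Id2, Fin.sum_univ_two] <;>
    ring_nf <;>
    rw [show (√2 : ℂ)⁻¹ ^ 6 = ((√2 : ℂ)⁻¹ ^ 2) ^ 3 by ring, inv_sqrt_two_sq, Complex.I_sq] <;>
    norm_num

theorem probes_maximally_entangled_at_pi_over_eight :
    trC (rho (Real.pi / 8)) = outer Phi ∧ trB (outer Phi) = (1 / 2 : ℂ) • Id2 :=
  ⟨trC_rho_pi_div_eight, trB_outer_Phi⟩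

end
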